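/- Suppose F satisfies (F1)–(F2), each estimator η_N satisfies (A1)–(A2), λ ∈ (0, 1/C₅) with C₅ := C₃ C₁ and C₃ := 1 + β/ν, and the perturbed contraction property holds: there are constants 0 < q < 1 and C₇ > 0 with η_{N+1}(u*_{N+1})² ≤ q η_N(u*_N)² + C₇ ‖u*_{N+1} − u*_N‖_X² for all N ≥ 0. Assume that for each N ≥ 0 there are elements w_N, u_N ∈ X_N such that a(w_N; u_N, v) = a(w_N; w_N, v) − ⟨F(w_N), v⟩ for all v ∈ X_N and ‖u_N − w_N‖_X ≤ λ η_N(u_N). Then u_N → u* in X as N → ∞. -/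

import Mathlib

/-!
The discrete solutions `u*_N` converge, by Céa's lemma, to the Galerkin solution on the closure
of `⋃ X_N`, which exists because `v ↦ v - t R v` (with `R` the Riesz representative of `F`) is a
contraction for small `t > 0`. Hence the perturbation terms `‖u*_{N+1} - u*_N‖²` vanish and the
perturbed contraction forces `η_N(u*_N) → 0`. Finally the linearized step gives
`‖u_N - u*_N‖ ≤ C₃ ‖u_N - w_N‖`, so the stopping criterion and (A1) bound `η_N(u_N)` by a
multiple of `η_N(u*_N)`, and (A2) turns this into `‖u_N - u*‖ ≲ η_N(u*_N)`.
-/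

open Filter Topology
open scoped RealInnerProductSpace

theorem tendsto_zero_of_le_mul_add {a b : ℕ → ℝ} {q : ℝ} (hq0 : 0 ≤ q) (hq1 : q < 1)
    (ha : ∀ n, 0 ≤ a n) (hrec : ∀ n, a (n + 1) ≤ q * a n + b n)
    (hb : Tendsto b atTop (𝓝 0)) : Tendsto a atTop (𝓝 0) := by
  refine tendsto_order.2 ⟨fun c hc => .of_forall fun n => hc.trans_le (ha n), fun ε hε => ?_⟩
  obtain ⟨M, hM⟩ := eventually_atTop.1 <|
    (tendsto_order.1 hb).2 _ (by nlinarith : 0 < ε / 2 * (1 - q))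
  have hgeom : ∀ k, a (M + k) ≤ q ^ k * a M + ε / 2 := by
    intro k
    induction k with
    | zero => simp only [add_zero, pow_zero, one_mul]; linarith
    | succ k ih =>
      calc a (M + (k + 1)) ≤ q * a (M + k) + b (M + k) := hrec _
        _ ≤ q * (q ^ k * a M + ε / 2) + ε / 2 * (1 - q) := by
          gcongr; exact (hM _ le_self_add).le
        _ = q ^ (k + 1) * a M + ε / 2 := by ring
  obtain ⟨K, hK⟩ := eventually_atTop.1 <|
    (tendsto_order.1 ((tendsto_pow_atTop_nhds_zero_of_lt_one hq0 hq1).mul_const (a M))).2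
      (ε / 2) (by simpa using half_pos hε)
  refine eventually_atTop.2 ⟨M + K, fun n hn => ?_⟩
  obtain ⟨k, rfl⟩ := Nat.exists_eq_add_of_le (le_self_add.trans hn)
  linarith [hgeom k, hK k (by omega)]

theorem mul_le_of_mul_sq_le_mul {a c d : ℝ} (ha : 0 ≤ a) (hd : 0 ≤ d) (h : c * a ^ 2 ≤ d * a) :
    c * a ≤ d := by
  rcases ha.eq_or_lt with rfl | ha
  · simpa using hd
  · exact le_of_mul_le_mul_right (by nlinarith) ha

section StronglyMonotone

variable {E : Type*} [NormedAddCommGroup E] [InnerProductSpace ℝ E] [CompleteSpace E]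

/-- Zarantonello: `v ↦ v - (ν / L²) • R v` is a contraction with constant `√(1 - ν² / L²)`. -/
theorem exists_eq_zero_of_lipschitz_of_strongly_monotone (R : E → E) {L ν : ℝ}
    (hL : 0 < L) (hν : 0 < ν) (hlip : ∀ v w, ‖R v - R w‖ ≤ L * ‖v - w‖)
    (hmono : ∀ v w, ν * ‖v - w‖ ^ 2 ≤ ⟪R v - R w, v - w⟫) : ∃ z, R z = 0 := by
  set t := ν / L ^ 2 with ht
  set c := 1 - ν ^ 2 / L ^ 2 with hc
  have hΦ : ∀ v w, ‖(v - t • R v) - (w - t • R w)‖ ^ 2 ≤ c * ‖v - w‖ ^ 2 := by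
    intro v w
    have hlip2 : ‖R v - R w‖ ^ 2 ≤ L ^ 2 * ‖v - w‖ ^ 2 := by
      rw [← mul_pow]; exact pow_le_pow_left₀ (norm_nonneg _) (hlip v w) 2
    calc ‖(v - t • R v) - (w - t • R w)‖ ^ 2
        = ‖v - w‖ ^ 2 - 2 * t * ⟪R v - R w, v - w⟫ + t ^ 2 * ‖R v - R w‖ ^ 2 := by
          rw [show (v - t • R v) - (w - t • R w) = (v - w) - t • (R v - R w) by
            rw [smul_sub]; abel, norm_sub_sq_real, inner_smul_right, real_inner_comm, norm_smul,
            Real.norm_of_nonneg (by positivity)]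
          ring
      _ ≤ ‖v - w‖ ^ 2 - 2 * t * (ν * ‖v - w‖ ^ 2) + t ^ 2 * (L ^ 2 * ‖v - w‖ ^ 2) := by
          gcongr
          exact hmono v w
      _ = c * ‖v - w‖ ^ 2 := by rw [ht, hc]; field_simp; ring
  have hcontr : ContractingWith (⟨√c, Real.sqrt_nonneg c⟩ : NNReal) fun v => v - t • R v := by
    have hc1 : c < 1 := by rw [hc]; linarith [show 0 < ν ^ 2 / L ^ 2 by positivity]
    refine ⟨(Real.sqrt_lt' one_pos).2 (by simpa using hc1),
      LipschitzWith.of_dist_le_mul fun v w => ?_⟩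
    change dist _ _ ≤ √c * dist v w
    rw [dist_eq_norm, dist_eq_norm, ← Real.sqrt_sq (norm_nonneg (v - w)),
      ← Real.sqrt_mul' _ (sq_nonneg _), ← Real.sqrt_sq (norm_nonneg (_ - _))]
    exact Real.sqrt_le_sqrt (hΦ v w)
  have : Nonempty E := ⟨0⟩
  refine ⟨hcontr.fixedPoint _, ?_⟩
  have hfix : t • R (hcontr.fixedPoint _) = 0 := sub_eq_self.1 hcontr.fixedPoint_isFixedPt
  exact (smul_eq_zero.1 hfix).resolve_left (by positivity)

theorem exists_eq_zero_of_strongly_monotone_dual (F : E → E →L[ℝ] ℝ) {L ν : ℝ}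
    (hL : 0 < L) (hν : 0 < ν) (hF1 : ∀ u v w : E, |F u w - F v w| ≤ L * ‖u - v‖ * ‖w‖)
    (hF2 : ∀ u v : E, ν * ‖u - v‖ ^ 2 ≤ F u (u - v) - F v (u - v)) : ∃ z, F z = 0 := by
  set R : E → E := fun v => (InnerProductSpace.toDual ℝ E).symm (F v)
  have hR : ∀ v w, ⟪R v, w⟫ = F v w := fun v w => InnerProductSpace.toDual_symm_apply
  obtain ⟨z, hz⟩ := exists_eq_zero_of_lipschitz_of_strongly_monotone R hL hν
    (fun v w => by
      rw [← map_sub, LinearIsometryEquiv.norm_map]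
      exact (F v - F w).opNorm_le_bound (by positivity) fun x => hF1 v w x)
    (fun v w => by rw [inner_sub_left, hR, hR]; exact hF2 v w)
  exact ⟨z, (LinearIsometryEquiv.map_eq_zero_iff _).1 hz⟩

end StronglyMonotone

section Galerkin

variable {X : Type*} [NormedAddCommGroup X] [InnerProductSpace ℝ X] (F : X → X →L[ℝ] ℝ)

theorem exists_galerkin_solution [CompleteSpace X] {L ν : ℝ} (hL : 0 < L) (hν : 0 < ν)
    (hF1 : ∀ u v w : X, |F u w - F v w| ≤ L * ‖u - v‖ * ‖w‖)
    (hF2 : ∀ u v : X, ν * ‖u - v‖ ^ 2 ≤ F u (u - v) - F v (u - v))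
    (S : Submodule ℝ X) [CompleteSpace S] : ∃ z ∈ S, ∀ v ∈ S, F z v = 0 := by
  obtain ⟨z, hz⟩ := exists_eq_zero_of_strongly_monotone_dual
    (fun v : S => (F v).comp S.subtypeL) hL hν (fun u v w => hF1 u v w) (fun u v => hF2 u v)
  exact ⟨z, z.2, fun v hv => congr($hz ⟨v, hv⟩)⟩

/-- Céa's lemma. -/
theorem mul_norm_sub_le_of_galerkin {L ν : ℝ} (hL : 0 ≤ L)
    (hF1 : ∀ u v w : X, |F u w - F v w| ≤ L * ‖u - v‖ * ‖w‖)
    (hF2 : ∀ u v : X, ν * ‖u - v‖ ^ 2 ≤ F u (u - v) - F v (u - v))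
    {V W : Submodule ℝ X} (hVW : V ≤ W) {z y v : X} (hzW : z ∈ W) (hz : ∀ x ∈ W, F z x = 0)
    (hyV : y ∈ V) (hy : ∀ x ∈ V, F y x = 0) (hv : v ∈ V) : ν * ‖z - y‖ ≤ L * ‖z - v‖ := by
  refine mul_le_of_mul_sq_le_mul (norm_nonneg _) (by positivity) ?_
  have horth : F z (z - y) - F y (z - y) = F z (z - v) - F y (z - v) := by
    rw [hz _ (sub_mem hzW (hVW hyV)), hz _ (sub_mem hzW (hVW hv)),
      show z - y = (z - v) + (v - y) by abel, map_add, hy _ (sub_mem hv hyV)]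
    ring
  calc ν * ‖z - y‖ ^ 2 ≤ F z (z - v) - F y (z - v) := horth ▸ hF2 z y
    _ ≤ L * ‖z - y‖ * ‖z - v‖ := (le_abs_self _).trans (hF1 _ _ _)
    _ = L * ‖z - v‖ * ‖z - y‖ := by ring

theorem exists_tendsto_galerkin [CompleteSpace X] {L ν : ℝ} (hL : 0 < L) (hν : 0 < ν)
    (hF1 : ∀ u v w : X, |F u w - F v w| ≤ L * ‖u - v‖ * ‖w‖)
    (hF2 : ∀ u v : X, ν * ‖u - v‖ ^ 2 ≤ F u (u - v) - F v (u - v))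
    {XN : ℕ → Submodule ℝ X} (hXN : Monotone XN) {y : ℕ → X} (hy_mem : ∀ N, y N ∈ XN N)
    (hy : ∀ N, ∀ v ∈ XN N, F (y N) v = 0) : ∃ z, Tendsto y atTop (𝓝 z) := by
  set S := (⨆ N, XN N).topologicalClosure
  obtain ⟨z, hzS, hz⟩ := exists_galerkin_solution F hL hν hF1 hF2 S
  have hXNS : ∀ N, XN N ≤ S := fun N => (le_iSup XN N).trans (Submodule.le_topologicalClosure _)
  refine ⟨z, Metric.tendsto_atTop.2 fun ε hε => ?_⟩
  obtain ⟨x, hx, hzx⟩ := Metric.mem_closure_iff.1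
    (by rwa [← Submodule.topologicalClosure_coe] : z ∈ closure (⨆ N, XN N : Submodule ℝ X))
    (ν * ε / L) (by positivity)
  obtain ⟨M, hxM⟩ := (Submodule.mem_iSup_of_directed XN hXN.directed_le).1 hx
  refine ⟨M, fun N hN => ?_⟩
  have hcea := mul_norm_sub_le_of_galerkin F hL.le hF1 hF2 (hXNS N) hzS hz (hy_mem N) (hy N)
    (hXN hN hxM)
  rw [dist_comm, dist_eq_norm]
  rw [dist_eq_norm, lt_div_iff₀ hL] at hzx
  nlinarith

theorem norm_sub_le_of_linearized_step {ν β : ℝ} (hν : 0 < ν) (hβ : 0 ≤ β)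
    (hF2 : ∀ u v : X, ν * ‖u - v‖ ^ 2 ≤ F u (u - v) - F v (u - v))
    (b : X →ₗ[ℝ] X →ₗ[ℝ] ℝ) (hbdd : ∀ v x, b v x ≤ β * ‖v‖ * ‖x‖) {V : Submodule ℝ X}
    {u w y : X} (hw : w ∈ V) (hyV : y ∈ V) (hy : ∀ x ∈ V, F y x = 0)
    (hstep : ∀ x ∈ V, b u x = b w x - F w x) : ‖u - y‖ ≤ (1 + β / ν) * ‖u - w‖ := by
  have hres : F w (w - y) - F y (w - y) = b (w - u) (w - y) := by
    rw [hy _ (sub_mem hw hyV), LinearMap.map_sub₂, hstep _ (sub_mem hw hyV)]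
    ring
  have hwy : ν * ‖w - y‖ ≤ β * ‖u - w‖ := by
    refine mul_le_of_mul_sq_le_mul (norm_nonneg _) (by positivity) ?_
    calc ν * ‖w - y‖ ^ 2 ≤ b (w - u) (w - y) := hres ▸ hF2 w y
      _ ≤ β * ‖w - u‖ * ‖w - y‖ := hbdd _ _
      _ = β * ‖u - w‖ * ‖w - y‖ := by rw [norm_sub_rev]
  calc ‖u - y‖ ≤ ‖u - w‖ + ‖w - y‖ := norm_sub_le_norm_sub_add_norm_sub _ _ _
    _ ≤ ‖u - w‖ + β / ν * ‖u - w‖ := by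
      gcongr
      rw [div_mul_eq_mul_div, le_div_iff₀ hν]
      linarith
    _ = (1 + β / ν) * ‖u - w‖ := by ring

end Galerkin

/-- The stopping criterion and (A1) give `(1 - λ C₃ C₁) η(u) ≤ η(y)`. -/
theorem norm_sub_le_mul_estimator {X : Type*} [NormedAddCommGroup X] {u w y ustar : X}
    {ηu ηy C₁ C₂ C₃ lam : ℝ} (hC₁ : 0 ≤ C₁) (hC₃ : 0 ≤ C₃) (hlam₀ : 0 ≤ lam)
    (hlam : lam * (C₃ * C₁) < 1)
    (huy : ‖u - y‖ ≤ C₃ * ‖u - w‖) (hstop : ‖u - w‖ ≤ lam * ηu)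
    (hA1 : |ηu - ηy| ≤ C₁ * ‖u - y‖) (hA2 : ‖ustar - y‖ ≤ C₂ * ηy) :
    ‖u - ustar‖ ≤ (C₃ * lam / (1 - lam * (C₃ * C₁)) + C₂) * ηy := by
  have huy' : ‖u - y‖ ≤ C₃ * lam * ηu := by
    rw [mul_assoc]; exact huy.trans (by gcongr)
  have hηu : ηu ≤ ηy / (1 - lam * (C₃ * C₁)) := by
    rw [le_div_iff₀ (by linarith)]
    nlinarith [le_abs_self (ηu - ηy)]
  calc ‖u - ustar‖ ≤ ‖u - y‖ + ‖ustar - y‖ := by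
        rw [← norm_sub_rev y ustar]; exact norm_sub_le_norm_sub_add_norm_sub _ _ _
    _ ≤ C₃ * lam * (ηy / (1 - lam * (C₃ * C₁))) + C₂ * ηy := by
        gcongr; exact huy'.trans (by gcongr)
    _ = (C₃ * lam / (1 - lam * (C₃ * C₁)) + C₂) * ηy := by ring

theorem stmt_16_general
    {X : Type*} [NormedAddCommGroup X] [InnerProductSpace ℝ X] [CompleteSpace X]
    (F : X → X →L[ℝ] ℝ) (L ν : ℝ) (hL : 0 < L) (hν : 0 < ν)
    (hF1 : ∀ u v w : X, |F u w - F v w| ≤ L * ‖u - v‖ * ‖w‖)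
    (hF2 : ∀ u v : X, ν * ‖u - v‖ ^ 2 ≤ F u (u - v) - F v (u - v))
    (ustar : X)
    (a : X → X →ₗ[ℝ] X →ₗ[ℝ] ℝ) (β : ℝ) (hβ : 0 < β)
    (hbdd : ∀ u v w : X, a u v w ≤ β * ‖v‖ * ‖w‖)
    (XN : ℕ → Submodule ℝ X)
    (hnested : ∀ N : ℕ, XN N ≤ XN (N + 1))
    (ustarN : ℕ → X) (hustarN_mem : ∀ N : ℕ, ustarN N ∈ XN N)
    (hustarN : ∀ N : ℕ, ∀ v ∈ XN N, F (ustarN N) v = 0)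
    (η : ℕ → X → ℝ) (C₁ C₂ : ℝ) (hC₁ : 1 ≤ C₁)
    (hηnonneg : ∀ N : ℕ, ∀ v ∈ XN N, 0 ≤ η N v)
    (hA1 : ∀ N : ℕ, ∀ v ∈ XN N, ∀ w ∈ XN N, |η N v - η N w| ≤ C₁ * ‖v - w‖)
    (hA2 : ∀ N : ℕ, ‖ustar - ustarN N‖ ≤ C₂ * η N (ustarN N))
    (C₃ C₅ : ℝ) (hC₃ : C₃ = 1 + β / ν) (hC₅ : C₅ = C₃ * C₁)
    (lam : ℝ) (hlam : 0 < lam) (hlam' : lam < 1 / C₅)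
    (q C₇ : ℝ) (hq0 : 0 < q) (hq1 : q < 1)
    (hperturb : ∀ N : ℕ,
      η (N + 1) (ustarN (N + 1)) ^ 2 ≤
        q * η N (ustarN N) ^ 2 + C₇ * ‖ustarN (N + 1) - ustarN N‖ ^ 2)
    (w u : ℕ → X) (hwmem : ∀ N : ℕ, w N ∈ XN N) (humem : ∀ N : ℕ, u N ∈ XN N)
    (hstep : ∀ N : ℕ, ∀ v ∈ XN N, a (w N) (u N) v = a (w N) (w N) v - F (w N) v)
    (hstop : ∀ N : ℕ, ‖u N - w N‖ ≤ lam * η N (u N)) :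
    Filter.Tendsto u Filter.atTop (nhds ustar) := by
  have hC₃₀ : 0 < C₃ := by rw [hC₃]; positivity
  have hlamC₅ : lam * (C₃ * C₁) < 1 := by
    rwa [lt_div_iff₀ (hC₅ ▸ mul_pos hC₃₀ (by linarith)), hC₅] at hlam'
  obtain ⟨z, hz⟩ := exists_tendsto_galerkin F hL hν hF1 hF2 (monotone_nat_of_le_succ hnested)
    hustarN_mem hustarN
  have hgap : Tendsto (fun N => C₇ * ‖ustarN (N + 1) - ustarN N‖ ^ 2) atTop (𝓝 0) := by
    simpa using (((hz.comp (tendsto_add_atTop_nat 1)).sub hz).norm.pow 2).const_mul C₇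
  have hη : Tendsto (fun N => η N (ustarN N)) atTop (𝓝 0) := by
    simpa [Real.sqrt_sq (hηnonneg _ _ (hustarN_mem _))] using
      (tendsto_zero_of_le_mul_add (a := fun N => η N (ustarN N) ^ 2) hq0.le hq1
        (fun N => sq_nonneg _) hperturb hgap).sqrt
  have hbound : ∀ N, ‖u N - ustar‖ ≤ (C₃ * lam / (1 - lam * (C₃ * C₁)) + C₂) * η N (ustarN N) :=
    fun N => norm_sub_le_mul_estimator (by linarith) hC₃₀.le hlam.le hlamC₅
      (hC₃ ▸ norm_sub_le_of_linearized_step F hν hβ.le hF2 (a (w N)) (hbdd (w N)) (hwmem N)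
        (hustarN_mem N) (hustarN N) (hstep N))
      (hstop N) (hA1 N _ (humem N) _ (hustarN_mem N)) (hA2 N)
  rw [tendsto_iff_norm_sub_tendsto_zero]
  exact squeeze_zero (fun N => norm_nonneg _) hbound (by simpa using hη.const_mul _)

/-- Convergence of the adaptive ILG outputs: under (F1)–(F2), (A1)–(A2), the stopping
criterion with `λ ∈ (0, 1/C₅)`, and the perturbed contraction property,
`u_N → u*` in `X` as `N → ∞`. -/
theorem stmt_16
    {X : Type*} [NormedAddCommGroup X] [InnerProductSpace ℝ X] [CompleteSpace X]
    (F : X → X →L[ℝ] ℝ) (L ν : ℝ) (hL : 0 < L) (hν : 0 < ν)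
    (hF1 : ∀ u v w : X, |F u w - F v w| ≤ L * ‖u - v‖ * ‖w‖)
    (hF2 : ∀ u v : X, ν * ‖u - v‖ ^ 2 ≤ F u (u - v) - F v (u - v))
    (ustar : X) (hustar : ∀ v : X, F ustar v = 0)
    (a : X → X →ₗ[ℝ] X →ₗ[ℝ] ℝ) (α β : ℝ) (hα : 0 < α) (hβ : 0 < β)
    (hcoer : ∀ u v : X, α * ‖v‖ ^ 2 ≤ a u v v)
    (hbdd : ∀ u v w : X, a u v w ≤ β * ‖v‖ * ‖w‖)
    (XN : ℕ → Submodule ℝ X) (hclosed : ∀ N : ℕ, IsClosed (XN N : Set X))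
    (hnested : ∀ N : ℕ, XN N ≤ XN (N + 1))
    (ustarN : ℕ → X) (hustarN_mem : ∀ N : ℕ, ustarN N ∈ XN N)
    (hustarN : ∀ N : ℕ, ∀ v ∈ XN N, F (ustarN N) v = 0)
    (η : ℕ → X → ℝ) (C₁ C₂ : ℝ) (hC₁ : 1 ≤ C₁) (hC₂ : 1 ≤ C₂)
    (hηnonneg : ∀ N : ℕ, ∀ v ∈ XN N, 0 ≤ η N v)
    (hA1 : ∀ N : ℕ, ∀ v ∈ XN N, ∀ w ∈ XN N, |η N v - η N w| ≤ C₁ * ‖v - w‖)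
    (hA2 : ∀ N : ℕ, ‖ustar - ustarN N‖ ≤ C₂ * η N (ustarN N))
    (C₃ C₅ : ℝ) (hC₃ : C₃ = 1 + β / ν) (hC₅ : C₅ = C₃ * C₁)
    (lam : ℝ) (hlam : 0 < lam) (hlam' : lam < 1 / C₅)
    (q C₇ : ℝ) (hq0 : 0 < q) (hq1 : q < 1) (hC₇ : 0 < C₇)
    (hperturb : ∀ N : ℕ,
      η (N + 1) (ustarN (N + 1)) ^ 2 ≤
        q * η N (ustarN N) ^ 2 + C₇ * ‖ustarN (N + 1) - ustarN N‖ ^ 2)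
    (w u : ℕ → X) (hwmem : ∀ N : ℕ, w N ∈ XN N) (humem : ∀ N : ℕ, u N ∈ XN N)
    (hstep : ∀ N : ℕ, ∀ v ∈ XN N, a (w N) (u N) v = a (w N) (w N) v - F (w N) v)
    (hstop : ∀ N : ℕ, ‖u N - w N‖ ≤ lam * η N (u N)) :
    Filter.Tendsto u Filter.atTop (nhds ustar) :=
  stmt_16_general F L ν hL hν hF1 hF2 ustar a β hβ hbdd XN hnested ustarN hustarN_mem hustarN η C₁
    C₂ hC₁ hηnonneg hA1 hA2 C₃ C₅ hC₃ hC₅ lam hlam hlam' q C₇ hq0 hq1 hperturb w u hwmem humem hstep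
    hstop
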